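/- On H_{≤0} (the Q-span of 1 and words [s_1,...,s_n] with all s_i ≤ 0, with shuffle product ⧢_{≤0} and derivation J_{≤0}), there is a unique linear map Δ_{≤0} : H_{≤0} → H_{≤0}⊗H_{≤0} satisfying: (1) Δ_{≤0}(1) = 1⊗1; (2) Δ_{≤0}([0]) = 1⊗[0] + [0]⊗1; (3) Δ_{≤0} J_{≤0} = (id⊗J_{≤0} + J_{≤0}⊗id)Δ_{≤0}; (4) Δ_{≤0}([0,s]) = Δ_{≤0}([0]) ⧢_{≤0} Δ_{≤0}([s]) for all words s with entries ≤ 0, where the product on the tensor square is componentwise. -/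

import Mathlib

open Finsupp TensorProduct

noncomputable section

/-- The underlying space of the extended shuffle algebra: formal ℚ-linear
combinations of words (lists of integers); the empty word is the unit `1`. -/
abbrev W : Type := List ℤ →₀ ℚ

/-- The basis word `[s₁,…,s_k]` (the empty list is the unit `1`). -/
def wd (l : List ℤ) : W := Finsupp.single l 1

/-- A word has all entries nonpositive. -/
def NP (l : List ℤ) : Prop := ∀ a ∈ l, a ≤ 0

/-- A word has all entries positive. -/
def Pos (l : List ℤ) : Prop := ∀ a ∈ l, 1 ≤ a

/-- The operator `J : 1 ↦ 0, [s₁,s₂,…] ↦ [s₁-1,s₂,…]`. -/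
def Jop : W →ₗ[ℚ] W :=
  Finsupp.lsum ℚ fun l => match l with
    | [] => (0 : ℚ →ₗ[ℚ] W)
    | a :: s => Finsupp.lsingle ((a - 1) :: s)

/-- Prepending `a` to every word: `[a, w]`. -/
def pre (a : ℤ) : W →ₗ[ℚ] W := Finsupp.lmapDomain ℚ ℚ (List.cons a)

/-- Characterization of the extended shuffle product on `H_ℤ`. -/
structure IsExtShuffle (sh : W →ₗ[ℚ] W →ₗ[ℚ] W) : Prop where
  assoc : ∀ x y z : W, sh (sh x y) z = sh x (sh y z)
  one_mul : ∀ x : W, sh (wd []) x = x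
  mul_one : ∀ x : W, sh x (wd []) = x
  zero_mul_word : ∀ s : List ℤ, sh (wd [0]) (wd s) = wd (0 :: s)
  word_mul_zero : ∀ (a : ℤ) (s : List ℤ), 0 < a → sh (wd (a :: s)) (wd [0]) = wd (0 :: a :: s)
  leibniz : ∀ x y : W, Jop (sh x y) = sh (Jop x) y + sh x (Jop y)
  graded : ∀ s t l : List ℤ, l.length ≠ s.length + t.length → sh (wd s) (wd t) l = 0

/-- The operator `J_{≥1}`. -/
def J1 : W →ₗ[ℚ] W :=
  Finsupp.lsum ℚ fun l => match l with
    | [] => (0 : ℚ →ₗ[ℚ] W)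
    | a :: s => if a = 1 then 0 else Finsupp.lsingle ((a - 1) :: s)

/-- The operator `δ_i`. -/
def del (i : ℕ) : W →ₗ[ℚ] W :=
  Finsupp.lsum ℚ fun l =>
    if i ≤ l.length then
      ∑ j ∈ Finset.range i, ((l.getD j 0 : ℤ) : ℚ) • Finsupp.lsingle (l.set j (l.getD j 0 + 1))
    else 0

def delZ (i : ℤ) : W →ₗ[ℚ] W := if 0 < i then del i.toNat else 0

/-- The shifted tensor `A ⊗̂ δ_i`. -/
def shiftT (A : W →ₗ[ℚ] W) (i : ℕ) : W ⊗[ℚ] W →ₗ[ℚ] W ⊗[ℚ] W :=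
  TensorProduct.lift <| Finsupp.lsum ℚ fun s =>
    LinearMap.toSpanSingleton ℚ (W →ₗ[ℚ] W ⊗[ℚ] W)
      ((TensorProduct.mk ℚ W W (A (wd s))) ∘ₗ delZ ((i : ℤ) - s.length))

/-- The counit. -/
def eps : W →ₗ[ℚ] ℚ :=
  Finsupp.lsum ℚ fun l => if l = [] then LinearMap.id else 0

/-- The grading degree `n - (s₁+⋯+s_n)` on words with nonpositive entries. -/
def gdeg (l : List ℤ) : ℤ := l.length - l.sum

/-- The componentwise product on `W ⊗ W`. -/
def shT (sh : W →ₗ[ℚ] W →ₗ[ℚ] W) : W ⊗[ℚ] W →ₗ[ℚ] W ⊗[ℚ] W →ₗ[ℚ] W ⊗[ℚ] W :=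
  TensorProduct.lift (LinearMap.compl₂ ((TensorProduct.mapBilinear (σ₁₂ := RingHom.id ℚ) (M := W) (N := W) (M₂ := W) (N₂ := W)).comp sh) sh)

/-- Characterization of the coproduct `Δ_{≤0}`. -/
structure IsDle0 (sh : W →ₗ[ℚ] W →ₗ[ℚ] W) (D : W →ₗ[ℚ] W ⊗[ℚ] W) : Prop where
  one : D (wd []) = wd [] ⊗ₜ[ℚ] wd []
  zero : D (wd [0]) = wd [] ⊗ₜ[ℚ] wd [0] + wd [0] ⊗ₜ[ℚ] wd []
  coder : ∀ l : List ℤ, NP l → D (Jop (wd l)) =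
      ((TensorProduct.map LinearMap.id Jop + TensorProduct.map Jop LinearMap.id :
        W ⊗[ℚ] W →ₗ[ℚ] W ⊗[ℚ] W)) (D (wd l))
  zeroCons : ∀ l : List ℤ, NP l → D (wd (0 :: l)) = shT sh (D (wd [0])) (D (wd l))

/-- The pairing realizing the Riemann duality map `φ`:
`phiPair x y = (φ x)(y)`, with `φ([s₁,…,s_k]) = [1-s₁,…,1-s_k]*`. -/
def phiPair : W →ₗ[ℚ] W →ₗ[ℚ] ℚ :=
  Finsupp.lsum ℚ fun l =>
    LinearMap.toSpanSingleton ℚ (W →ₗ[ℚ] ℚ) (Finsupp.lapply (l.map fun a => 1 - a))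

/-- `pairT f g` evaluates a tensor against a pair of linear functionals. -/
def pairT (f g : W →ₗ[ℚ] ℚ) : W ⊗[ℚ] W →ₗ[ℚ] ℚ :=
  TensorProduct.lift ((LinearMap.mul ℚ ℚ).compl₁₂ f g)

/-- The transpose of the dual operator `δ̃_m` (with `δ̃_m = 0` for `m ≤ 0`). -/
def tT (m : ℤ) : W →ₗ[ℚ] W :=
  Finsupp.lsum ℚ fun l =>
    if 0 < m ∧ m ≤ (l.length : ℤ) then
      ∑ j ∈ Finset.range m.toNat,
        ((-(l.getD j 0) : ℤ) : ℚ) • Finsupp.lsingle (l.set j (l.getD j 0 + 1))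
    else 0


/-! ### Auxiliary material for the proof -/

lemma Jop_wd_nil : Jop (wd []) = 0 := by
  simp [Jop, wd, Finsupp.lsum_single]

lemma Jop_wd_cons (a : ℤ) (s : List ℤ) : Jop (wd (a :: s)) = wd ((a - 1) :: s) := by
  simp [Jop, wd, Finsupp.lsum_single]

lemma shT_tmul (sh : W →ₗ[ℚ] W →ₗ[ℚ] W) (a b c d : W) :
    shT sh (a ⊗ₜ[ℚ] b) (c ⊗ₜ[ℚ] d) = sh a c ⊗ₜ[ℚ] sh b d := by
  simp [shT, TensorProduct.mapBilinear_apply]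

/-- `1 ⊗ [0] + [0] ⊗ 1`. -/
def D0 : W ⊗[ℚ] W := wd [] ⊗ₜ[ℚ] wd [0] + wd [0] ⊗ₜ[ℚ] wd []

/-- `id ⊗ J + J ⊗ id`. -/
def Kop : W ⊗[ℚ] W →ₗ[ℚ] W ⊗[ℚ] W :=
  TensorProduct.map LinearMap.id Jop + TensorProduct.map Jop LinearMap.id

def mes (l : List ℤ) : ℕ := l.length + (l.map fun a => (-a).toNat).sum

def Drec (sh : W →ₗ[ℚ] W →ₗ[ℚ] W) : List ℤ → W ⊗[ℚ] W
  | [] => wd [] ⊗ₜ[ℚ] wd []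
  | a :: s =>
    if a = 0 then shT sh D0 (Drec sh s)
    else if a < 0 then Kop (Drec sh ((a + 1) :: s)) else wd [] ⊗ₜ[ℚ] wd []
termination_by l => mes l
decreasing_by
  · simp [mes]; omega
  · simp [mes]; omega

lemma Drec_nil (sh : W →ₗ[ℚ] W →ₗ[ℚ] W) : Drec sh [] = wd [] ⊗ₜ[ℚ] wd [] := by
  rw [Drec]

lemma Drec_zero_cons (sh : W →ₗ[ℚ] W →ₗ[ℚ] W) (s : List ℤ) :
    Drec sh (0 :: s) = shT sh D0 (Drec sh s) := by
  rw [Drec]; simp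

lemma Drec_neg_cons (sh : W →ₗ[ℚ] W →ₗ[ℚ] W) (a : ℤ) (s : List ℤ) (h : a < 0) :
    Drec sh (a :: s) = Kop (Drec sh ((a + 1) :: s)) := by
  rw [Drec]; simp [h, h.ne]

/-- The candidate coproduct. -/
def Dmap (sh : W →ₗ[ℚ] W →ₗ[ℚ] W) : W →ₗ[ℚ] W ⊗[ℚ] W :=
  Finsupp.lsum ℚ fun l => LinearMap.toSpanSingleton ℚ (W ⊗[ℚ] W) (Drec sh l)

lemma Dmap_wd (sh : W →ₗ[ℚ] W →ₗ[ℚ] W) (l : List ℤ) : Dmap sh (wd l) = Drec sh l := by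
  simp [Dmap, wd, Finsupp.lsum_single, LinearMap.toSpanSingleton_apply]

lemma Drec_zero (sh : W →ₗ[ℚ] W →ₗ[ℚ] W) (hsh : IsExtShuffle sh) :
    Drec sh [0] = D0 := by
  rw [Drec_zero_cons, Drec_nil, D0]
  simp only [map_add, LinearMap.add_apply, shT_tmul, hsh.one_mul, hsh.mul_one]


/-- Existence and uniqueness (on `H_{≤0}`) of the coproduct `Δ_{≤0}`
satisfying `Δ(1)=1⊗1`, `Δ([0])=1⊗[0]+[0]⊗1`, the coderivation recursion for `J_{≤0}`, and
`Δ([0,s]) = Δ([0]) ⧢ Δ([s])`. -/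
theorem Dle0_exists_unique
    (sh : W →ₗ[ℚ] W →ₗ[ℚ] W) (hsh : IsExtShuffle sh) :
    (∃ D : W →ₗ[ℚ] W ⊗[ℚ] W, IsDle0 sh D)
    ∧ (∀ D D' : W →ₗ[ℚ] W ⊗[ℚ] W, IsDle0 sh D → IsDle0 sh D' →
        ∀ l : List ℤ, NP l → D (wd l) = D' (wd l)) := by
  constructor
  · refine ⟨Dmap sh, ?_, ?_, ?_, ?_⟩
    · rw [Dmap_wd, Drec_nil]
    · rw [Dmap_wd, Drec_zero sh hsh]; rfl
    · intro l hl
      match l with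
      | [] =>
        rw [Jop_wd_nil, (Dmap sh).map_zero, Dmap_wd, Drec_nil]
        simp [TensorProduct.map_tmul, Jop_wd_nil, TensorProduct.tmul_zero,
          TensorProduct.zero_tmul]
      | a :: s =>
        rw [Jop_wd_cons, Dmap_wd, Dmap_wd,
          Drec_neg_cons sh (a - 1) s (by have := hl a (by simp); omega)]
        norm_num [Kop]
    · intro l _
      rw [Dmap_wd, Dmap_wd, Dmap_wd, Drec_zero_cons, Drec_zero sh hsh]
  · intro D D' hD hD' l hl
    have key : ∀ n : ℕ, ∀ l : List ℤ, mes l ≤ n → NP l → D (wd l) = D' (wd l) := by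
      intro n
      induction n with
      | zero =>
        intro l hm _
        match l with
        | [] => rw [hD.one, hD'.one]
        | a :: s => simp [mes] at hm
      | succ n ih =>
        intro l hm hl
        match l with
        | [] => rw [hD.one, hD'.one]
        | a :: s =>
          have ha : a ≤ 0 := hl a (by simp)
          have hs : NP s := fun x hx => hl x (by simp [hx])
          rcases eq_or_lt_of_le ha with rfl | ha'
          · rw [hD.zeroCons s hs, hD'.zeroCons s hs, hD.zero, hD'.zero,
              ih s (by simp [mes] at hm ⊢; omega) hs]
          · have h1 : NP ((a + 1) :: s) := by
              intro x hx; rcases List.mem_cons.1 hx with rfl | hx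
              · omega
              · exact hs x hx
            have e1 : D (wd (a :: s)) =
                ((TensorProduct.map LinearMap.id Jop + TensorProduct.map Jop LinearMap.id :
                  W ⊗[ℚ] W →ₗ[ℚ] W ⊗[ℚ] W)) (D (wd ((a + 1) :: s))) := by
              have := hD.coder ((a + 1) :: s) h1
              rwa [Jop_wd_cons, add_sub_cancel_right] at this
            have e2 : D' (wd (a :: s)) =
                ((TensorProduct.map LinearMap.id Jop + TensorProduct.map Jop LinearMap.id :
                  W ⊗[ℚ] W →ₗ[ℚ] W ⊗[ℚ] W)) (D' (wd ((a + 1) :: s))) := by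
              have := hD'.coder ((a + 1) :: s) h1
              rwa [Jop_wd_cons, add_sub_cancel_right] at this
            rw [e1, e2, ih ((a + 1) :: s) (by simp [mes] at hm ⊢; omega) h1]
    exact key (mes l) l le_rfl hl

end
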